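/- (Theorem 3.1, combined h-form.) Let k ≥ 3 and m ≥ 2 be integers and n = m(k − 1) + 1. For every n-tuple (d₁, …, dₙ) of positive integers with Σᵢ dᵢ = km, setting δᵢ = dᵢ(k − 1) and h = Σᵢ δᵢ·log₂ δᵢ, one has (m − 1)(2k − 2)·log₂(2k − 2) + (n − m + 1)(k − 1)·log₂(k − 1) ≤ h ≤ m(k − 1)·log₂(m(k − 1)) + (n − 1)(k − 1)·log₂(k − 1). -/

import Mathlib

/-!
Write `φ(x) = x log₂ x` and `L = log₂ (k - 1)`. Since `δᵢ = (k - 1) dᵢ`, one has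
`h = (k - 1) (Σ φ(dᵢ) + k m L)`, and `Σ (dᵢ - 1) = k m - n = m - 1`, so the theorem reduces to
`2 (m - 1) ≤ Σ φ(dᵢ) ≤ φ(m)`. Both bounds come from the convexity of `φ` together with `φ(1) = 0`:
the slope `φ(x) / (x - 1)` is nondecreasing on `x > 1`. For an integer `d ≥ 2` this gives
`φ(d) ≥ (d - 1) φ(2) = 2 (d - 1)`, and since every `dᵢ ≤ m` it gives `φ(dᵢ) ≤ (dᵢ - 1) φ(m) / (m - 1)`.
-/

open Real Finset

lemma convexOn_mul_logb {b : ℝ} (hb : 1 < b) : ConvexOn ℝ (Set.Ici 0) fun x ↦ x * logb b x :=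
  (convexOn_mul_log.smul (inv_nonneg.2 (log_nonneg hb.le))).congr fun x _ ↦ by
    simp only [logb, smul_eq_mul]
    ring

lemma sub_one_mul_mul_logb_le {b x y : ℝ} (hb : 1 < b) (hx : 1 ≤ x) (hxy : x ≤ y) :
    (y - 1) * (x * logb b x) ≤ (x - 1) * (y * logb b y) := by
  rcases hx.eq_or_lt with rfl | hx
  · simp
  rcases hxy.eq_or_lt with rfl | hxy
  · exact le_rfl
  simpa using (convexOn_mul_logb hb).secant_mono_aux1 (x := 1) (by simp)
    (show y ∈ Set.Ici (0 : ℝ) from Set.mem_Ici.2 (by linarith)) hx hxy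

lemma two_mul_sub_one_le_mul_logb_two (d : ℕ) : 2 * ((d : ℝ) - 1) ≤ d * logb 2 d := by
  rcases Nat.lt_or_ge d 2 with hd | hd
  · interval_cases d <;> simp
  have hd : (2 : ℝ) ≤ d := by exact_mod_cast hd
  have := sub_one_mul_mul_logb_le one_lt_two one_le_two hd
  rw [logb_self_eq_one one_lt_two] at this
  linarith

lemma sum_mul_logb_le {ι : Type*} {s : Finset ι} {x : ι → ℝ} {b M : ℝ} (hb : 1 < b)
    (hx : ∀ i ∈ s, 1 ≤ x i) (hM : ∑ i ∈ s, (x i - 1) = M - 1) :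
    ∑ i ∈ s, x i * logb b (x i) ≤ M * logb b M := by
  have hxM : ∀ i ∈ s, x i ≤ M := fun i hi ↦ by
    have := single_le_sum (fun j hj ↦ sub_nonneg.2 (hx j hj)) hi
    linarith
  have hM1 : 0 ≤ M - 1 := hM ▸ sum_nonneg fun i hi ↦ sub_nonneg.2 (hx i hi)
  rcases hM1.eq_or_lt with hM1 | hM1
  · have hx1 : ∀ i ∈ s, x i = 1 := fun i hi ↦ by linarith [hx i hi, hxM i hi]
    rw [sum_eq_zero fun i hi ↦ by rw [hx1 i hi]; simp, show M = 1 by linarith]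
    simp
  refine le_of_mul_le_mul_left ?_ hM1
  calc (M - 1) * ∑ i ∈ s, x i * logb b (x i)
      ≤ ∑ i ∈ s, (x i - 1) * (M * logb b M) := by
        rw [mul_sum]
        exact sum_le_sum fun i hi ↦ sub_one_mul_mul_logb_le hb (hx i hi) (hxM i hi)
    _ = (M - 1) * (M * logb b M) := by rw [← sum_mul, hM]

lemma mul_mul_logb_mul {b x c : ℝ} (hx : x ≠ 0) (hc : c ≠ 0) :
    x * c * logb b (x * c) = c * (x * logb b x) + c * logb b c * x := by
  rw [logb_mul hx hc]
  ring

/-- Theorem 3.1, combined `h`-form: for every `k`-uniform hypertree degree sequence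
(`n = m(k-1)+1` positive integers `dᵢ` with `Σ dᵢ = km`, Laplacian degrees
`δᵢ = dᵢ(k-1)`), the quantity `h = Σ δᵢ log₂ δᵢ` satisfies
`(m-1)(2k-2)log₂(2k-2) + (n-m+1)(k-1)log₂(k-1) ≤ h ≤
m(k-1)log₂(m(k-1)) + (n-1)(k-1)log₂(k-1)`. -/
theorem stmt_15 (k m n : ℕ) (hk : 3 ≤ k) (hm : 2 ≤ m) (hn : n = m * (k - 1) + 1)
    (d : Fin n → ℕ) (hd : ∀ i, 1 ≤ d i) (hsum : ∑ i, d i = k * m)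
    (δ : Fin n → ℝ) (hδ : ∀ i, δ i = (d i : ℝ) * ((k : ℝ) - 1)) :
    ((m : ℝ) - 1) * (2 * (k : ℝ) - 2) * Real.logb 2 (2 * (k : ℝ) - 2) +
        ((n : ℝ) - (m : ℝ) + 1) * ((k : ℝ) - 1) * Real.logb 2 ((k : ℝ) - 1) ≤
      ∑ i, δ i * Real.logb 2 (δ i) ∧
    ∑ i, δ i * Real.logb 2 (δ i) ≤
      (m : ℝ) * ((k : ℝ) - 1) * Real.logb 2 ((m : ℝ) * ((k : ℝ) - 1)) +
        ((n : ℝ) - 1) * ((k : ℝ) - 1) * Real.logb 2 ((k : ℝ) - 1) := by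
  have hk0 : (0 : ℝ) < k - 1 := by rw [sub_pos, Nat.one_lt_cast]; omega
  have hm0 : (m : ℝ) ≠ 0 := Nat.cast_ne_zero.2 (by omega)
  have hnR : (n : ℝ) = m * (k - 1) + 1 := by
    rw [hn]; push_cast [show 1 ≤ k by omega]; ring
  have hsumR : ∑ i, (d i : ℝ) = k * m := by exact_mod_cast hsum
  have hexcess : ∑ i, ((d i : ℝ) - 1) = m - 1 := by
    rw [sum_sub_distrib, hsumR, sum_const, card_univ, Fintype.card_fin, nsmul_one, hnR]
    ring
  set S := ∑ i, (d i : ℝ) * logb 2 (d i)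
  set L := logb 2 ((k : ℝ) - 1)
  have h_split : ∑ i, δ i * logb 2 (δ i) = (k - 1) * S + (k - 1) * L * (k * m) := by
    rw [sum_congr rfl fun i _ ↦ hδ i ▸ mul_mul_logb_mul (b := 2)
      (Nat.cast_ne_zero.2 (Nat.one_le_iff_ne_zero.1 (hd i))) hk0.ne',
      sum_add_distrib, ← mul_sum, ← mul_sum, hsumR]
  have hS_ge : 2 * ((m : ℝ) - 1) ≤ S := by
    rw [← hexcess, mul_sum]
    exact sum_le_sum fun i _ ↦ two_mul_sub_one_le_mul_logb_two (d i)
  have hS_le : S ≤ m * logb 2 m :=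
    sum_mul_logb_le one_lt_two (fun i _ ↦ by exact_mod_cast hd i) hexcess
  have hlog_two_mul : logb 2 (2 * (k : ℝ) - 2) = 1 + L := by
    rw [show 2 * (k : ℝ) - 2 = 2 * (k - 1) by ring, logb_mul two_ne_zero hk0.ne',
      logb_self_eq_one one_lt_two]
  have hlog_mul : logb 2 ((m : ℝ) * (k - 1)) = logb 2 m + L := logb_mul hm0 hk0.ne'
  rw [h_split, hlog_two_mul, hlog_mul, hnR]
  constructor
  · linear_combination mul_le_mul_of_nonneg_left hS_ge hk0.le
  · linear_combination mul_le_mul_of_nonneg_left hS_le hk0.le
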